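/- With notation as above, suppose ξ₁, ξ₂ : X → W are surjective linear maps such that both pairs (ξ₁, η) and (ξ₂, η) satisfy the relation η + η* + ξ_iξ_i* = 0, with η invertible. Then there exists h ∈ H with Norm(ξ₁, η) = h^{-1} · Norm(ξ₂, η) · h; i.e., the two norms are conjugate in H. -/

import Mathlib

/-!
Since `ξᵢ ξᵢ* = -(η + η*)` for both `i`, the maps `ξ₁*, ξ₂* : W' → X`, injective because `ξᵢ` is
onto, induce the same form `(w₁', w₂') ↦ Bp w₁' (ξᵢ ξᵢ* w₂')` on `W'`. Witt's extension theorem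
then gives an isometry `h` of `X` with `h ξ₁* = ξ₂*`, and nondegeneracy of `Bp` turns this into
`ξ₂ h = ξ₁`; these two identities say that `h` conjugates `Norm(ξ₁, η)` to `Norm(ξ₂, η)`.

Witt's theorem, for injective `f g : U → V` with the same Gram form, is proved by induction on
`dim V`. If `f U` contains an anisotropic vector, or (then `Φ` is alternating) a hyperbolic pair,
transvections `x ↦ x + c Φ d x • d` and `-1` move it onto its image under `g`; it spans a
nondegenerate `P`, and what is left happens in `P^⊥`. If `f U` is totally isotropic, `U` is first
enlarged by a line on which `f` and `g` pair a radical vector with isotropic partners.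
-/

open Module Submodule

theorem Module.Dual.exists_apply_ne_zero_and_apply_ne_zero {R M : Type*} [Semiring R]
    [AddCommMonoid M] [Module R M] {l₁ l₂ : Dual R M} (h₁ : ∃ x, l₁ x ≠ 0)
    (h₂ : ∃ x, l₂ x ≠ 0) : ∃ x, l₁ x ≠ 0 ∧ l₂ x ≠ 0 := by
  obtain ⟨x, hx⟩ := h₁
  obtain ⟨y, hy⟩ := h₂
  by_cases hxy : l₂ x = 0
  · by_cases hyx : l₁ y = 0
    · exact ⟨x + y, by simpa [hyx], by simpa [hxy]⟩
    · exact ⟨y, hyx, hy⟩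
  · exact ⟨x, hx, hxy⟩

namespace LinearMap.IsOrthogonal

section CommRing

variable {R M : Type*} [CommRing R] [AddCommGroup M] [Module R M] {B : LinearMap.BilinForm R M}

theorem symm {e : M ≃ₗ[R] M} (he : B.IsOrthogonal e) : B.IsOrthogonal e.symm :=
  fun x y ↦ by rw [← he, e.apply_symm_apply, e.apply_symm_apply]

theorem trans {e₁ e₂ : M ≃ₗ[R] M} (h₁ : B.IsOrthogonal e₁) (h₂ : B.IsOrthogonal e₂) :
    B.IsOrthogonal (e₁.trans e₂) :=
  fun x y ↦ by rw [LinearEquiv.trans_apply, LinearEquiv.trans_apply, h₂, h₁]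

theorem neg : B.IsOrthogonal (LinearEquiv.neg R : M ≃ₗ[R] M) :=
  fun x y ↦ by simp

end CommRing

variable {F V : Type*} [Field F] [AddCommGroup V] [Module F V] {Φ : LinearMap.BilinForm F V}

theorem injective {T : V →ₗ[F] V} (hT : Φ.IsOrthogonal T) (hnd : Φ.SeparatingLeft) :
    Function.Injective T :=
  (injective_iff_map_eq_zero T).2 fun x hx ↦ hnd x fun y ↦ by
    rw [← hT, hx, map_zero, LinearMap.zero_apply]

theorem exists_linearEquiv {T : V →ₗ[F] V} (hT : Φ.IsOrthogonal T) (hnd : Φ.SeparatingLeft)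
    [FiniteDimensional F V] : ∃ h : V ≃ₗ[F] V, Φ.IsOrthogonal h ∧ ∀ x, h x = T x :=
  ⟨.ofInjectiveEndo T (hT.injective hnd), hT, fun _ ↦ rfl⟩

end LinearMap.IsOrthogonal

namespace LinearMap.BilinForm

variable {F V : Type*} [Field F] [AddCommGroup V] [Module F V] {Φ : LinearMap.BilinForm F V}
  {ε : F}

theorem one_sub_mul_apply_self_eq_zero (hsym : ∀ x y, Φ x y = ε * Φ y x) (x : V) :
    (1 - ε) * Φ x x = 0 := by
  linear_combination hsym x x

theorem isOrthogonal_transvection (hsym : ∀ x y, Φ x y = ε * Φ y x) (d : V) {c : F}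
    (hc : c * (1 + ε) + c ^ 2 * Φ d d = 0) :
    Φ.IsOrthogonal (transvection (c • Φ d) d) := by
  intro x y
  simp only [transvection.apply, LinearMap.smul_apply, smul_eq_mul, map_add, map_smul,
    LinearMap.add_apply]
  rw [hsym x d]
  linear_combination Φ d x * Φ d y * hc

theorem exists_isOrthogonal_apply_eq (hsym : ∀ x y, Φ x y = ε * Φ y x)
    (hnd : Φ.SeparatingLeft) [FiniteDimensional F V] {a b : V} (hab : Φ a a = Φ b b)
    (hba : Φ (b - a) a ≠ 0) :
    ∃ h : V ≃ₗ[F] V, Φ.IsOrthogonal h ∧ h a = b ∧ ∀ x, Φ (b - a) x = 0 → h x = x := by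
  have hdd : Φ (b - a) (b - a) = -(1 + ε) * Φ (b - a) a := by
    simp only [map_sub, LinearMap.sub_apply]
    linear_combination -hsym a b - hab + one_sub_mul_apply_self_eq_zero hsym a
  have hc : (Φ (b - a) a)⁻¹ * (1 + ε) + (Φ (b - a) a)⁻¹ ^ 2 * Φ (b - a) (b - a) = 0 := by
    rw [hdd]
    field_simp
    ring
  have hT := isOrthogonal_transvection hsym (b - a) hc
  obtain ⟨h, hh, hhT⟩ := hT.exists_linearEquiv hnd
  refine ⟨h, hh, ?_, fun x hx ↦ ?_⟩
  · rw [hhT, transvection.apply, LinearMap.smul_apply, smul_eq_mul, inv_mul_cancel₀ hba,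
      one_smul]
    abel
  · rw [hhT, transvection.apply, LinearMap.smul_apply, smul_eq_mul, hx, mul_zero, zero_smul,
      add_zero]

theorem exists_isOrthogonal_apply_eq_of_anisotropic (hsym : ∀ x y, Φ x y = ε * Φ y x)
    (h2 : (2 : F) ≠ 0) (hnd : Φ.SeparatingLeft) [FiniteDimensional F V] {a b : V}
    (hab : Φ a a = Φ b b) (ha : Φ a a ≠ 0) : ∃ h : V ≃ₗ[F] V, Φ.IsOrthogonal h ∧ h a = b := by
  by_cases hba : Φ (b - a) a = 0
  · -- now `Φ (-b - a) a = -2 Φ a a`: move `a` to `-b` instead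
    have hba' : Φ (-b - a) a ≠ 0 := by
      simp only [map_sub, map_neg, LinearMap.sub_apply, LinearMap.neg_apply] at hba ⊢
      intro h
      have : 2 * Φ a a = 0 := by linear_combination -h - hba
      exact ha ((mul_eq_zero.1 this).resolve_left h2)
    obtain ⟨τ, hτ, hτa, -⟩ :=
      exists_isOrthogonal_apply_eq hsym hnd (by simpa using hab) hba'
    exact ⟨τ.trans (LinearEquiv.neg F), hτ.trans IsOrthogonal.neg, by simp [hτa]⟩
  · obtain ⟨τ, hτ, hτa, -⟩ := exists_isOrthogonal_apply_eq hsym hnd hab hba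
    exact ⟨τ, hτ, hτa⟩

theorem isAlt_of_apply_ne_zero (hsym : ∀ x y, Φ x y = ε * Φ y x) (h2 : (2 : F) ≠ 0) {x y : V}
    (hx : Φ x x = 0) (hy : Φ y y = 0) (hxy : Φ (x + y) (x + y) = 0) (h : Φ x y ≠ 0) :
    Φ.IsAlt := by
  have hε : 1 + ε = 0 := by
    refine (mul_eq_zero.1 ?_).resolve_right h
    simp only [map_add, LinearMap.add_apply, hx, hy, hsym y x] at hxy
    linear_combination hxy
  intro z
  have := hsym z z
  rw [show ε = -1 by linear_combination hε] at this
  exact (mul_eq_zero.1 (by linear_combination this : 2 * Φ z z = 0)).resolve_left h2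

section Alternating

variable (halt : Φ.IsAlt) (hnd : Φ.SeparatingLeft) [FiniteDimensional F V]
include halt hnd

theorem exists_isOrthogonal_apply_eq_of_isAlt {a b : V} (hba : Φ b a ≠ 0) :
    ∃ h : V ≃ₗ[F] V, Φ.IsOrthogonal h ∧ h a = b ∧ ∀ x, Φ (b - a) x = 0 → h x = x :=
  exists_isOrthogonal_apply_eq (ε := -1) (fun x y ↦ by rw [← halt.neg_eq]; ring) hnd
    (by rw [halt.self_eq_zero, halt.self_eq_zero]) (by simpa [halt.self_eq_zero] using hba)

theorem exists_isOrthogonal_apply_eq_fixing_of_isAlt {a b c p : V} (hca : Φ c a ≠ 0)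
    (hbc : Φ b c ≠ 0) (hp₁ : Φ (c - a) p = 0) (hp₂ : Φ (b - c) p = 0) :
    ∃ h : V ≃ₗ[F] V, Φ.IsOrthogonal h ∧ h a = b ∧ h p = p := by
  obtain ⟨τ₁, hτ₁, hτ₁a, hτ₁p⟩ := exists_isOrthogonal_apply_eq_of_isAlt halt hnd hca
  obtain ⟨τ₂, hτ₂, hτ₂c, hτ₂p⟩ := exists_isOrthogonal_apply_eq_of_isAlt halt hnd hbc
  exact ⟨τ₁.trans τ₂, hτ₁.trans hτ₂, by simp [hτ₁a, hτ₂c],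
    by simp [hτ₁p p hp₁, hτ₂p p hp₂]⟩

theorem exists_isOrthogonal_apply_eq_of_isAlt_of_ne_zero {a b : V} (ha : a ≠ 0) (hb : b ≠ 0) :
    ∃ h : V ≃ₗ[F] V, Φ.IsOrthogonal h ∧ h a = b := by
  have hl₁ : ∃ x, Φ.flip a x ≠ 0 := by
    by_contra! h
    exact ha (hnd a fun y ↦ by rw [← halt.neg_eq, ← flip_apply, h, neg_zero])
  have hl₂ : ∃ x, Φ b x ≠ 0 := by
    by_contra! h
    exact hb (hnd b h)
  obtain ⟨c, hca, hbc⟩ := Dual.exists_apply_ne_zero_and_apply_ne_zero hl₁ hl₂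
  obtain ⟨h, hh, hha, -⟩ :=
    exists_isOrthogonal_apply_eq_fixing_of_isAlt halt hnd (p := 0) hca hbc (by simp) (by simp)
  exact ⟨h, hh, hha⟩

theorem exists_isOrthogonal_apply_eq_pair_of_isAlt {p q p' q' : V} (hpq : Φ p q = 1)
    (hpq' : Φ p' q' = 1) :
    ∃ h : V ≃ₗ[F] V, Φ.IsOrthogonal h ∧ h p = p' ∧ h q = q' := by
  have hne {x y : V} (h : Φ x y = 1) : x ≠ 0 := by rintro rfl; simp at h
  obtain ⟨ρ, hρ, hρp⟩ :=
    exists_isOrthogonal_apply_eq_of_isAlt_of_ne_zero halt hnd (hne hpq) (hne hpq')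
  have hρq : Φ p' (ρ q) = 1 := by rw [← hρp, hρ, hpq]
  have hfix : Φ (q' - ρ q) p' = 0 := by
    rw [map_sub, LinearMap.sub_apply, ← halt.neg_eq p' q', ← halt.neg_eq p' (ρ q), hρq, hpq',
      sub_self]
  obtain ⟨σ, hσ, hσq, hσp⟩ :
      ∃ σ : V ≃ₗ[F] V, Φ.IsOrthogonal σ ∧ σ (ρ q) = q' ∧ σ p' = p' := by
    by_cases hqq : Φ q' (ρ q) = 0
    · refine exists_isOrthogonal_apply_eq_fixing_of_isAlt halt hnd (c := ρ q + p') ?_ ?_ ?_ ?_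
      · simp [halt.self_eq_zero, hρq]
      · simp [hqq, ← halt.neg_eq p' q', hpq']
      · simp [halt.self_eq_zero]
      · rwa [sub_add_eq_sub_sub, map_sub, LinearMap.sub_apply, halt.self_eq_zero, sub_zero]
    · obtain ⟨σ, hσ, hσq, hσp⟩ := exists_isOrthogonal_apply_eq_of_isAlt halt hnd hqq
      exact ⟨σ, hσ, hσq, hσp p' hfix⟩
  exact ⟨ρ.trans σ, hρ.trans hσ, by simp [hρp, hσp], by simp [hσq]⟩

end Alternating

theorem apply_add_add_of_mem_orthogonal (hsym : ∀ x y, Φ x y = ε * Φ y x) {P : Submodule F V}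
    {a a' s s' : V} (ha : a ∈ P) (ha' : a' ∈ P) (hs : s ∈ Φ.orthogonal P)
    (hs' : s' ∈ Φ.orthogonal P) : Φ (a + s) (a' + s') = Φ a a' + Φ s s' := by
  have h₁ : Φ a s' = 0 := hs' a ha
  have h₂ : Φ a' s = 0 := hs a' ha'
  simp only [map_add, LinearMap.add_apply, hsym s a', h₁, h₂, mul_zero, add_zero, zero_add]

theorem exists_isOrthogonal_of_isCompl (hsym : ∀ x y, Φ x y = ε * Φ y x)
    (hnd : Φ.SeparatingLeft) [FiniteDimensional F V] {P : Submodule F V}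
    (hP : IsCompl P (Φ.orthogonal P)) {h₂ : Φ.orthogonal P ≃ₗ[F] Φ.orthogonal P}
    (hh₂ : (Φ.restrict (Φ.orthogonal P)).IsOrthogonal h₂) :
    ∃ h : V ≃ₗ[F] V, Φ.IsOrthogonal h ∧ (∀ x ∈ P, h x = x) ∧
      ∀ s : Φ.orthogonal P, h s = h₂ s := by
  set T := ofIsCompl hP P.subtype ((Φ.orthogonal P).subtype ∘ₗ h₂.toLinearMap)
  have hTas (a : P) (s : Φ.orthogonal P) : T (a + s) = a + h₂ s := by simp [T]
  have hT : Φ.IsOrthogonal T := by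
    intro x y
    obtain ⟨a, s, rfl, -⟩ := Submodule.existsUnique_add_of_isCompl hP x
    obtain ⟨a', s', rfl, -⟩ := Submodule.existsUnique_add_of_isCompl hP y
    have hs := hh₂ s s'
    simp only [restrict_apply, domRestrict_apply] at hs
    rw [hTas, hTas, apply_add_add_of_mem_orthogonal hsym a.2 a'.2 (h₂ s).2 (h₂ s').2,
      apply_add_add_of_mem_orthogonal hsym a.2 a'.2 s.2 s'.2, hs]
  obtain ⟨h, hh, hhT⟩ := hT.exists_linearEquiv hnd
  refine ⟨h, hh, fun x hx ↦ ?_, fun s ↦ ?_⟩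
  · simpa [hhT] using hTas ⟨x, hx⟩ 0
  · simpa [hhT] using hTas 0 s

theorem separatingLeft_restrict_orthogonal (hsym : ∀ x y, Φ x y = ε * Φ y x)
    (hnd : Φ.SeparatingLeft) {P : Submodule F V} (hP : IsCompl P (Φ.orthogonal P)) :
    (Φ.restrict (Φ.orthogonal P)).SeparatingLeft := by
  intro s hs
  refine Subtype.ext (hnd s fun x ↦ ?_)
  obtain ⟨a, t, rfl, -⟩ := Submodule.existsUnique_add_of_isCompl hP x
  rw [map_add, hsym s a, s.2 a a.2, mul_zero, zero_add]
  exact hs t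

theorem isCompl_span_pair_orthogonal (halt : Φ.IsAlt) [FiniteDimensional F V] {p q : V}
    (hpq : Φ p q = 1) : IsCompl (span F {p, q}) (Φ.orthogonal (span F {p, q})) := by
  rw [isCompl_orthogonal_iff_disjoint halt.isRefl, Submodule.disjoint_def]
  intro x hx hxo
  obtain ⟨c, d, rfl⟩ := Submodule.mem_span_pair.1 hx
  have h₁ : Φ p (c • p + d • q) = 0 := hxo p (subset_span (by simp))
  have h₂ : Φ q (c • p + d • q) = 0 := hxo q (subset_span (by simp))
  simp [halt.self_eq_zero, hpq, ← halt.neg_eq p q] at h₁ h₂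
  simp [h₁, h₂]

def ExtendsIsometries (Φ : LinearMap.BilinForm F V) : Prop :=
  ∀ (U : Submodule F V) (σ : U →ₗ[F] V), Function.Injective σ →
    (∀ x y : U, Φ (σ x) (σ y) = Φ x y) →
      ∃ h : V ≃ₗ[F] V, Φ.IsOrthogonal h ∧ ∀ x : U, h x = σ x

theorem ExtendsIsometries.exists_isOrthogonal (hW : Φ.ExtendsIsometries) {U : Type*}
    [AddCommGroup U] [Module F U] {f g : U →ₗ[F] V} (hf : Function.Injective f)
    (hg : Function.Injective g) (hfg : ∀ x y, Φ (f x) (f y) = Φ (g x) (g y)) :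
    ∃ h : V ≃ₗ[F] V, Φ.IsOrthogonal h ∧ ∀ u, h (f u) = g u := by
  set e := LinearEquiv.ofInjective f hf
  obtain ⟨h, hh, hhσ⟩ := hW (range f) (g ∘ₗ e.symm.toLinearMap) (hg.comp e.symm.injective)
    fun x y ↦ by
      obtain ⟨x, rfl⟩ := e.surjective x
      obtain ⟨y, rfl⟩ := e.surjective y
      simp [e, hfg]
  exact ⟨h, hh, fun u ↦ by simpa [e] using hhσ (e u)⟩

theorem exists_isOrthogonal_of_splits (hsym : ∀ x y, Φ x y = ε * Φ y x)
    (hnd : Φ.SeparatingLeft) [FiniteDimensional F V] {P : Submodule F V}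
    (hP : IsCompl P (Φ.orthogonal P)) (hW : (Φ.restrict (Φ.orthogonal P)).ExtendsIsometries)
    {U : Type*} [AddCommGroup U] [Module F U] {f g : U →ₗ[F] V} (hf : Function.Injective f)
    (hg : Function.Injective g) (hfg : ∀ x y, Φ (f x) (f y) = Φ (g x) (g y))
    (hsplit : ∀ u, ∃ u₁, f u₁ ∈ P ∧ g u₁ = f u₁ ∧
      f (u - u₁) ∈ Φ.orthogonal P ∧ g (u - u₁) ∈ Φ.orthogonal P) :
    ∃ h : V ≃ₗ[F] V, Φ.IsOrthogonal h ∧ ∀ u, h (f u) = g u := by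
  set S := Φ.orthogonal P
  set U₂ : Submodule F U := S.comap f ⊓ S.comap g
  set f₂ : U₂ →ₗ[F] S := (f ∘ₗ U₂.subtype).codRestrict S fun u ↦ u.2.1
  set g₂ : U₂ →ₗ[F] S := (g ∘ₗ U₂.subtype).codRestrict S fun u ↦ u.2.2
  obtain ⟨h₂, hh₂, hfg₂⟩ := hW.exists_isOrthogonal (f := f₂) (g := g₂)
    (fun x y hxy ↦ Subtype.ext (hf (congrArg Subtype.val hxy)))
    (fun x y hxy ↦ Subtype.ext (hg (congrArg Subtype.val hxy)))
    (fun x y ↦ hfg x y)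
  obtain ⟨h, hh, hhP, hhS⟩ := exists_isOrthogonal_of_isCompl hsym hnd hP hh₂
  refine ⟨h, hh, fun u ↦ ?_⟩
  obtain ⟨u₁, hfu₁, hgu₁, hf₂, hg₂⟩ := hsplit u
  have h₂u : h (f (u - u₁)) = g (u - u₁) :=
    (hhS ⟨_, hf₂⟩).trans (congrArg Subtype.val (hfg₂ ⟨u - u₁, hf₂, hg₂⟩))
  calc h (f u) = h (f u₁) + h (f (u - u₁)) := by rw [← map_add, ← map_add, add_sub_cancel]
    _ = g u := by rw [hhP _ hfu₁, h₂u, ← hgu₁, ← map_add, add_sub_cancel]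

theorem exists_apply_eq_dual (hsym : ∀ x y, Φ x y = ε * Φ y x) (hnd : Φ.SeparatingLeft)
    [FiniteDimensional F V] {U : Type*} [AddCommGroup U] [Module F U] {f : U →ₗ[F] V}
    (hf : Function.Injective f) (φ : Dual F U) : ∃ z, ∀ u, Φ (f u) z = φ u := by
  have hflip : Function.Surjective (LinearMap.flip Φ) := by
    refine (injective_iff_surjective_of_finrank_eq_finrank Subspace.dual_finrank_eq.symm).1 ?_
    refine (injective_iff_map_eq_zero _).2 fun z hz ↦ hnd z fun x ↦ ?_
    rw [hsym, ← LinearMap.flip_apply (f := Φ), hz, LinearMap.zero_apply, mul_zero]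
  obtain ⟨ψ, rfl⟩ := dualMap_surjective_of_injective hf φ
  obtain ⟨z, rfl⟩ := hflip ψ
  exact ⟨z, fun u ↦ rfl⟩

theorem exists_isotropic_apply_eq_dual (hsym : ∀ x y, Φ x y = ε * Φ y x) (h2 : (2 : F) ≠ 0)
    (hnd : Φ.SeparatingLeft) [FiniteDimensional F V] {U : Type*} [AddCommGroup U] [Module F U]
    {f : U →ₗ[F] V} (hf : Function.Injective f) (hiso : ∀ u v, Φ (f u) (f v) = 0) {r : U}
    {φ : Dual F U} (hφ : φ r = 1) : ∃ z, Φ z z = 0 ∧ ∀ u, Φ (f u) z = φ u := by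
  obtain ⟨z, hz⟩ := exists_apply_eq_dual hsym hnd hf φ
  refine ⟨z - (Φ z z / 2) • f r, ?_, fun u ↦ by simp [hiso, hz]⟩
  simp only [map_sub, map_smul, LinearMap.sub_apply, LinearMap.smul_apply, smul_eq_mul, hz, hφ,
    hiso, hsym z (f r)]
  field_simp
  linear_combination 2 * one_sub_mul_apply_self_eq_zero hsym z

theorem injective_coprod_toSpanSingleton {U : Type*} [AddCommGroup U] [Module F U]
    {f : U →ₗ[F] V} (hf : Function.Injective f) {r : U} {z : V}
    (hr : ∀ u, Φ (f r) (f u) = 0) (hrz : Φ (f r) z ≠ 0) :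
    Function.Injective (f.coprod (toSpanSingleton F V z)) := by
  refine (injective_iff_map_eq_zero _).2 fun ⟨u, t⟩ h ↦ ?_
  simp only [coprod_apply, toSpanSingleton_apply] at h
  have ht : t = 0 := by
    have := congrArg (Φ (f r)) h
    simpa [hr, hrz] using this
  subst ht
  simpa using hf (by simpa using h : f u = f 0)

section Extension

variable (hsym : ∀ x y, Φ x y = ε * Φ y x) (hnd : Φ.SeparatingLeft) [FiniteDimensional F V]
  (hrest : ∀ P : Submodule F V, P ≠ ⊥ → IsCompl P (Φ.orthogonal P) →
    (Φ.restrict (Φ.orthogonal P)).ExtendsIsometries)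
  {U : Type*} [AddCommGroup U] [Module F U] {f g : U →ₗ[F] V} (hf : Function.Injective f)
  (hg : Function.Injective g) (hfg : ∀ x y, Φ (f x) (f y) = Φ (g x) (g y))
include hsym hnd hrest hf hg hfg

theorem exists_isOrthogonal_of_eqOn {U₁ : Submodule F U} (hU₁ : U₁.map f ≠ ⊥)
    (hP : IsCompl (U₁.map f) (Φ.orthogonal (U₁.map f))) {ρ : V ≃ₗ[F] V}
    (hρ : Φ.IsOrthogonal ρ) (hρfg : ∀ u ∈ U₁, ρ (f u) = g u) :
    ∃ h : V ≃ₗ[F] V, Φ.IsOrthogonal h ∧ ∀ u, h (f u) = g u := by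
  set g' := ρ.symm.toLinearMap ∘ₗ g
  have hfg' x y : Φ (f x) (f y) = Φ (g' x) (g' y) := (hfg x y).trans (hρ.symm _ _).symm
  have hsplit u : ∃ u₁, f u₁ ∈ U₁.map f ∧ g' u₁ = f u₁ ∧
      f (u - u₁) ∈ Φ.orthogonal (U₁.map f) ∧ g' (u - u₁) ∈ Φ.orthogonal (U₁.map f) := by
    obtain ⟨⟨_, u₁, hu₁, rfl⟩, s, hs, -⟩ := Submodule.existsUnique_add_of_isCompl hP (f u)
    have hfs : f (u - u₁) = s := by rw [map_sub, ← hs, add_sub_cancel_left]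
    refine ⟨u₁, ⟨u₁, hu₁, rfl⟩, by simp [g', ← hρfg u₁ hu₁], hfs ▸ s.2, ?_⟩
    rintro _ ⟨v, hv, rfl⟩
    calc Φ (f v) (g' (u - u₁)) = Φ (g' v) (g' (u - u₁)) := by
          simp [g', ← hρfg v hv]
      _ = 0 := by rw [← hfg', hfs]; exact s.2 _ ⟨v, hv, rfl⟩
  obtain ⟨h, hh, hhfg⟩ := exists_isOrthogonal_of_splits hsym hnd hP (hrest _ hU₁ hP)
    hf (ρ.symm.injective.comp hg) hfg' hsplit
  exact ⟨h.trans ρ, hh.trans hρ, fun u ↦ by simp [hhfg, g']⟩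

theorem exists_isOrthogonal_of_anisotropic (h2 : (2 : F) ≠ 0) {u₀ : U}
    (hu₀ : Φ (f u₀) (f u₀) ≠ 0) : ∃ h : V ≃ₗ[F] V, Φ.IsOrthogonal h ∧ ∀ u, h (f u) = g u := by
  obtain ⟨ρ, hρ, hρu₀⟩ :=
    exists_isOrthogonal_apply_eq_of_anisotropic hsym h2 hnd (hfg u₀ u₀) hu₀
  have hmap : (F ∙ u₀).map f = F ∙ f u₀ := by rw [Submodule.map_span, Set.image_singleton]
  refine exists_isOrthogonal_of_eqOn hsym hnd hrest hf hg hfg (U₁ := F ∙ u₀) ?_ ?_ hρ ?_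
  · rw [hmap, Ne, Submodule.span_singleton_eq_bot]
    rintro h
    simp [h] at hu₀
  · rw [hmap]
    exact isCompl_span_singleton_orthogonal hu₀
  · intro u hu
    obtain ⟨t, rfl⟩ := Submodule.mem_span_singleton.1 hu
    simp [hρu₀]

theorem exists_isOrthogonal_of_isotropic_of_apply_ne_zero (h2 : (2 : F) ≠ 0)
    (hiso : ∀ u, Φ (f u) (f u) = 0) {u₀ v₀ : U} (hu₀v₀ : Φ (f u₀) (f v₀) ≠ 0) :
    ∃ h : V ≃ₗ[F] V, Φ.IsOrthogonal h ∧ ∀ u, h (f u) = g u := by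
  have halt : Φ.IsAlt :=
    isAlt_of_apply_ne_zero hsym h2 (hiso u₀) (hiso v₀) (by rw [← map_add]; exact hiso _) hu₀v₀
  set u₁ := (Φ (f u₀) (f v₀))⁻¹ • v₀
  have h₁ : Φ (f u₀) (f u₁) = 1 := by simp [u₁, hu₀v₀]
  obtain ⟨ρ, hρ, hρu₀, hρu₁⟩ :=
    exists_isOrthogonal_apply_eq_pair_of_isAlt halt hnd h₁ ((hfg _ _).symm.trans h₁)
  have hmap : (span F {u₀, u₁}).map f = span F {f u₀, f u₁} := by
    rw [Submodule.map_span, Set.image_pair]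
  refine exists_isOrthogonal_of_eqOn hsym hnd hrest hf hg hfg (U₁ := span F {u₀, u₁})
    ?_ ?_ hρ ?_
  · rw [hmap]
    intro h
    have : f u₀ ∈ span F {f u₀, f u₁} := subset_span (by simp)
    simp [h] at this
    simp [this] at h₁
  · rw [hmap]
    exact isCompl_span_pair_orthogonal halt h₁
  · intro u hu
    obtain ⟨c, d, rfl⟩ := Submodule.mem_span_pair.1 hu
    simp [hρu₀, hρu₁]

theorem exists_isOrthogonal_of_not_isotropic (h2 : (2 : F) ≠ 0)
    (hU : ∃ u v, Φ (f u) (f v) ≠ 0) :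
    ∃ h : V ≃ₗ[F] V, Φ.IsOrthogonal h ∧ ∀ u, h (f u) = g u := by
  by_cases hanis : ∃ u, Φ (f u) (f u) ≠ 0
  · obtain ⟨u₀, hu₀⟩ := hanis
    exact exists_isOrthogonal_of_anisotropic hsym hnd hrest hf hg hfg h2 hu₀
  · simp only [not_exists, not_not] at hanis
    obtain ⟨u₀, v₀, h⟩ := hU
    exact exists_isOrthogonal_of_isotropic_of_apply_ne_zero hsym hnd hrest hf hg hfg h2 hanis h

theorem exists_isOrthogonal_of_totallyIsotropic (h2 : (2 : F) ≠ 0)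
    (hU : ∀ u v, Φ (f u) (f v) = 0) {r : U} (hr : r ≠ 0) :
    ∃ h : V ≃ₗ[F] V, Φ.IsOrthogonal h ∧ ∀ u, h (f u) = g u := by
  -- enlarge `U` by a line pairing nontrivially with the radical vector `f r`
  obtain ⟨φ, hφ⟩ := Projective.exists_dual_eq_one F hr
  have hU' u v : Φ (g u) (g v) = 0 := (hfg u v).symm.trans (hU u v)
  obtain ⟨z, hz, hfz⟩ := exists_isotropic_apply_eq_dual hsym h2 hnd hf hU hφ
  obtain ⟨w, hw, hgw⟩ := exists_isotropic_apply_eq_dual hsym h2 hnd hg hU' hφ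
  set f' := f.coprod (toSpanSingleton F V z)
  set g' := g.coprod (toSpanSingleton F V w)
  have hf' : Function.Injective f' :=
    injective_coprod_toSpanSingleton hf (hU r) (by simp [hfz, hφ])
  have hg' : Function.Injective g' :=
    injective_coprod_toSpanSingleton hg (hU' r) (by simp [hgw, hφ])
  have hfg' : ∀ x y, Φ (f' x) (f' y) = Φ (g' x) (g' y) := by
    rintro ⟨u, s⟩ ⟨v, t⟩
    simp only [f', g', coprod_apply, toSpanSingleton_apply, map_add, map_smul,
      LinearMap.add_apply, LinearMap.smul_apply, smul_eq_mul]
    rw [hsym z (f v), hsym w (g v), hfz, hfz, hgw, hgw, hz, hw, hfg]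
  obtain ⟨h, hh, hhfg⟩ := exists_isOrthogonal_of_not_isotropic hsym hnd hrest hf' hg' hfg' h2
    ⟨(r, 0), (0, 1), by simp [f', hfz, hφ]⟩
  exact ⟨h, hh, fun u ↦ by simpa [f', g'] using hhfg (u, 0)⟩

theorem exists_isOrthogonal_of_orthogonal_extendsIsometries (h2 : (2 : F) ≠ 0) :
    ∃ h : V ≃ₗ[F] V, Φ.IsOrthogonal h ∧ ∀ u, h (f u) = g u := by
  by_cases hU : ∃ u v, Φ (f u) (f v) ≠ 0
  · exact exists_isOrthogonal_of_not_isotropic hsym hnd hrest hf hg hfg h2 hU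
  simp only [not_exists, not_not] at hU
  by_cases hr : ∃ r : U, r ≠ 0
  · obtain ⟨r, hr⟩ := hr
    exact exists_isOrthogonal_of_totallyIsotropic hsym hnd hrest hf hg hfg h2 hU hr
  simp only [not_exists, not_not] at hr
  exact ⟨LinearEquiv.refl F V, fun _ _ ↦ rfl, fun u ↦ by simp [hr u]⟩

end Extension

/-- **Witt's extension theorem** for ε-symmetric forms in characteristic different from 2. -/
theorem extendsIsometries (hsym : ∀ x y, Φ x y = ε * Φ y x) (h2 : (2 : F) ≠ 0)
    (hnd : Φ.SeparatingLeft) [FiniteDimensional F V] : Φ.ExtendsIsometries := by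
  induction hn : finrank F V using Nat.strong_induction_on generalizing V with
  | _ n ih =>
  intro U σ hσ hσΦ
  refine exists_isOrthogonal_of_orthogonal_extendsIsometries hsym hnd (fun P hP0 hP ↦ ?_)
    U.injective_subtype hσ (fun x y ↦ (hσΦ x y).symm) h2
  refine ih _ ?_ (fun x y ↦ hsym x y) (separatingLeft_restrict_orthogonal hsym hnd hP) rfl
  have := Submodule.finrank_eq_zero.not.2 hP0
  rw [← hn, ← Submodule.finrank_add_eq_of_isCompl hP]
  omega

end LinearMap.BilinForm

theorem LinearMap.injective_of_adjoint_of_surjective {F X W W' : Type*} [Field F]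
    [AddCommGroup X] [Module F X] [AddCommGroup W] [Module F W] [AddCommGroup W'] [Module F W']
    {Φ : X →ₗ[F] X →ₗ[F] F} {B : W' →ₗ[F] W →ₗ[F] F} (hB : B.SeparatingLeft)
    {ξ : X →ₗ[F] W} (hξ : Function.Surjective ξ) {ξs : W' →ₗ[F] X}
    (hadj : ∀ w' x, Φ (ξs w') x = B w' (ξ x)) : Function.Injective ξs :=
  (injective_iff_map_eq_zero ξs).2 fun w' hw' ↦ hB w' fun w ↦ by
    obtain ⟨x, rfl⟩ := hξ w
    rw [← hadj, hw', map_zero, LinearMap.zero_apply]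

theorem norms_conjugate_general
    (F : Type*) [Field F] (hchar : (2 : F) ≠ 0)
    (W W' X : Type*)
    [AddCommGroup W] [Module F W]
    [AddCommGroup W'] [Module F W']
    [AddCommGroup X] [Module F X] [FiniteDimensional F X]
    (ε : F)
    (Bp : W' →ₗ[F] W →ₗ[F] F)
    (hBp1 : ∀ w' : W', (∀ w : W, Bp w' w = 0) → w' = 0)
    (hBp2 : ∀ w : W, (∀ w' : W', Bp w' w = 0) → w = 0)
    (Φ : X →ₗ[F] X →ₗ[F] F)
    (hΦnd : ∀ x : X, (∀ y : X, Φ x y = 0) → x = 0)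
    (hΦε : ∀ x y : X, Φ x y = ε * Φ y x)
    (ξ₁ ξ₂ : X →ₗ[F] W)
    (hξ₁surj : Function.Surjective ξ₁) (hξ₂surj : Function.Surjective ξ₂)
    (ξ1s ξ2s : W' →ₗ[F] X)
    (hξ1s : ∀ (w' : W') (x : X), Φ (ξ1s w') x = Bp w' (ξ₁ x))
    (hξ2s : ∀ (w' : W') (x : X), Φ (ξ2s w') x = Bp w' (ξ₂ x))
    (η : W' ≃ₗ[F] W) (ηs : W' →ₗ[F] W)
    (hrel₁ : ∀ w' : W', η w' + ηs w' + ξ₁ (ξ1s w') = 0)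
    (hrel₂ : ∀ w' : W', η w' + ηs w' + ξ₂ (ξ2s w') = 0) :
    ∃ h : X ≃ₗ[F] X, (∀ x y : X, Φ (h x) (h y) = Φ x y) ∧
      ∀ x : X, x + ξ1s (η.symm (ξ₁ x)) = h.symm (h x + ξ2s (η.symm (ξ₂ (h x)))) := by
  have hgram x y : Φ (ξ1s x) (ξ1s y) = Φ (ξ2s x) (ξ2s y) := by
    rw [hξ1s, hξ2s, eq_neg_of_add_eq_zero_right (hrel₁ y), eq_neg_of_add_eq_zero_right (hrel₂ y)]
  obtain ⟨h, hh, hhξ⟩ := (LinearMap.BilinForm.extendsIsometries hΦε hchar hΦnd).exists_isOrthogonal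
    (LinearMap.injective_of_adjoint_of_surjective hBp1 hξ₁surj hξ1s)
    (LinearMap.injective_of_adjoint_of_surjective hBp1 hξ₂surj hξ2s) hgram
  have hξh x : ξ₂ (h x) = ξ₁ x := by
    refine sub_eq_zero.1 (hBp2 _ fun w' ↦ ?_)
    rw [map_sub, ← hξ2s, ← hξ1s, ← hhξ, hh, sub_self]
  refine ⟨h, hh, fun x ↦ ?_⟩
  rw [hξh, ← hhξ, ← map_add, LinearEquiv.symm_apply_apply]

/-- If `ξ₁, ξ₂ : X → W` are surjections such that `(ξ₁, η)` and `(ξ₂, η)` both satisfy the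
defining relation `η + η* + ξᵢ ξᵢ* = 0` (with `η` invertible), then there is `h ∈ H` with
`Norm(ξ₁, η) = h⁻¹ ∘ Norm(ξ₂, η) ∘ h`, where `Norm(ξ,η) = 1 + ξ* η⁻¹ ξ`. -/
theorem norms_conjugate
    (F : Type*) [Field F] (hchar : (2 : F) ≠ 0)
    (W W' X : Type*)
    [AddCommGroup W] [Module F W] [FiniteDimensional F W]
    [AddCommGroup W'] [Module F W'] [FiniteDimensional F W']
    [AddCommGroup X] [Module F X] [FiniteDimensional F X]
    (ε : F) (hε : ε = 1 ∨ ε = -1)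
    (Bp : W' →ₗ[F] W →ₗ[F] F)
    (hBp1 : ∀ w' : W', (∀ w : W, Bp w' w = 0) → w' = 0)
    (hBp2 : ∀ w : W, (∀ w' : W', Bp w' w = 0) → w = 0)
    (Φ : X →ₗ[F] X →ₗ[F] F)
    (hΦnd : ∀ x : X, (∀ y : X, Φ x y = 0) → x = 0)
    (hΦε : ∀ x y : X, Φ x y = ε * Φ y x)
    (ξ₁ ξ₂ : X →ₗ[F] W)
    (hξ₁surj : Function.Surjective ξ₁) (hξ₂surj : Function.Surjective ξ₂)
    (ξ1s ξ2s : W' →ₗ[F] X)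
    (hξ1s : ∀ (w' : W') (x : X), Φ (ξ1s w') x = Bp w' (ξ₁ x))
    (hξ2s : ∀ (w' : W') (x : X), Φ (ξ2s w') x = Bp w' (ξ₂ x))
    (η : W' ≃ₗ[F] W) (ηs : W' →ₗ[F] W)
    (hηs : ∀ w₁' w₂' : W', ε * Bp w₂' (ηs w₁') = Bp w₁' (η w₂'))
    (hrel₁ : ∀ w' : W', η w' + ηs w' + ξ₁ (ξ1s w') = 0)
    (hrel₂ : ∀ w' : W', η w' + ηs w' + ξ₂ (ξ2s w') = 0) :
    ∃ h : X ≃ₗ[F] X, (∀ x y : X, Φ (h x) (h y) = Φ x y) ∧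
      ∀ x : X, x + ξ1s (η.symm (ξ₁ x)) = h.symm (h x + ξ2s (η.symm (ξ₂ (h x)))) :=
  norms_conjugate_general F hchar W W' X ε Bp hBp1 hBp2 Φ hΦnd hΦε ξ₁ ξ₂ hξ₁surj hξ₂surj ξ1s ξ2s
    hξ1s hξ2s η ηs hrel₁ hrel₂
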